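/- Let φ be a propositional formula in conjunctive normal form over variables x₁,…,x_N with clauses C₁,…,C_M, each clause being a nonempty set of literals from {x₁,…,x_N, x̄₁,…,x̄_N}. Define the MDP M_φ with states S = {x₁,…,x_N, x̄₁,…,x̄_N} and actions Act = {α, ᾱ}, where (indices taken cyclically, so that i+1 denotes 1 when i = N): P(xᵢ,α,x_{i+1}) = P(x̄ᵢ,α,x_{i+1}) = 1 and P(xᵢ,ᾱ,x̄_{i+1}) = P(x̄ᵢ,ᾱ,x̄_{i+1}) = 1 for all 1 ≤ i ≤ N, with all other transition probabilities 0. Identify each clause C_j with the set of states corresponding to its literals. Then φ is satisfiable if and only if there exists a scheduler σ for M_φ with Σ_{i=1}^N [2 − (Pr^{M_φ,σ}_{x₁}(□◇{xᵢ}) + Pr^{M_φ,σ}_{x₁}(□◇{x̄ᵢ}))] + Σ_{j=1}^M Pr^{M_φ,σ}_{x₁}(□◇C_j) ≥ N + M. -/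

import Mathlib

open scoped Classical
open Filter

noncomputable section

/-- A Markov decision process with state space `S` and action space `A`. -/
structure MDP (S A : Type) where
  P : S → A → S → ℝ
  nonneg : ∀ s a s', 0 ≤ P s a s'
  le_one : ∀ s a s', P s a s' ≤ 1
  exists_enabled : ∀ s : S, ∃ a : A, (∑' s', P s a s') = 1
  zero_of_not_enabled : ∀ (s : S) (a : A), (∑' s', P s a s') ≠ 1 → (∑' s', P s a s') = 0

namespace MDP

variable {S A : Type}

/-- Action `a` is enabled in state `s`. -/
def Enabled (M : MDP S A) (s : S) (a : A) : Prop := (∑' s', M.P s a s') = 1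

/-- `s` is an absorbing state. -/
def AbsorbingState (M : MDP S A) (s : S) : Prop := ∀ a : A, M.Enabled s a → M.P s a s = 1

/-- An absorbing set of states: all its elements are absorbing. -/
def AbsorbingSet (M : MDP S A) (T : Set S) : Prop := ∀ s ∈ T, M.AbsorbingState s

end MDP

/-- A finite path: an initial state together with a list of (action, next state) steps. -/
abbrev FPath (S A : Type) : Type := S × List (A × S)

/-- The last state of a finite path. -/
def fpLast {S A : Type} (p : FPath S A) : S := ((p.2.map Prod.snd).getLast?).getD p.1

/-- Extending a finite path by one step. -/
def fpExt {S A : Type} (p : FPath S A) (a : A) (s' : S) : FPath S A := (p.1, p.2 ++ [(a, s')])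

/-- A (history-dependent, randomized) scheduler for the MDP `M`. -/
structure Scheduler {S A : Type} (M : MDP S A) where
  act : FPath S A → A → ℝ
  nonneg : ∀ p a, 0 ≤ act p a
  sum_one : ∀ p, (∑' a, act p a) = 1
  not_enabled : ∀ p a, ¬ M.Enabled (fpLast p) a → act p a = 0

namespace Scheduler

variable {S A : Type} {M : MDP S A}

/-- A memoryless scheduler depends only on the last state of the path. -/
def Memoryless (σ : Scheduler M) : Prop :=
  ∀ p : FPath S A, σ.act p = σ.act (fpLast p, ([] : List (A × S)))

/-- A deterministic scheduler chooses a Dirac distribution on every path. -/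
def Deterministic (σ : Scheduler M) : Prop := ∀ p : FPath S A, ∃ a : A, σ.act p a = 1

/-- A memoryless deterministic (MD) scheduler. -/
def MD (σ : Scheduler M) : Prop := σ.Memoryless ∧ σ.Deterministic

end Scheduler

/-- One-step expectation operator: expected value of `g` after one step from `p`. -/
def stepExp {S A : Type} (M : MDP S A) (σ : Scheduler M) (p : FPath S A)
    (g : FPath S A → ℝ) : ℝ :=
  ∑' a : A, ∑' s' : S, σ.act p a * M.P (fpLast p) a s' * g (fpExt p a s')

/-- Probability of visiting `T` within `n` further steps, continuing the finite path `p`. -/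
def reachN {S A : Type} (M : MDP S A) (σ : Scheduler M) (T : Set S) :
    ℕ → FPath S A → ℝ
  | 0, p => if fpLast p ∈ T then 1 else 0
  | n + 1, p => if fpLast p ∈ T then 1 else stepExp M σ p (reachN M σ T n)

/-- Reachability probability `Pr^{M,σ}_s(◇T)`. -/
def reachProb {S A : Type} (M : MDP S A) (σ : Scheduler M) (s : S) (T : Set S) : ℝ :=
  ⨆ n : ℕ, reachN M σ T n (s, [])

/-- Probability of visiting `T` at some time `≥ j` within `j + n` steps, from path `p`. -/
def reachAfterN {S A : Type} (M : MDP S A) (σ : Scheduler M) (T : Set S) :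
    ℕ → ℕ → FPath S A → ℝ
  | 0, n, p => reachN M σ T n p
  | j + 1, n, p => stepExp M σ p (fun p' => reachAfterN M σ T j n p')

/-- Büchi probability `Pr^{M,σ}_s(□◇T)`: the probability of visiting `T` infinitely often. -/
def buchiProb {S A : Type} (M : MDP S A) (σ : Scheduler M) (s : S) (T : Set S) : ℝ :=
  ⨅ j : ℕ, ⨆ n : ℕ, reachAfterN M σ T j n (s, [])

/-- Expected sum of the rewards of the first `n+1` states (counting the current one). -/
def expRewN {S A : Type} (M : MDP S A) (σ : Scheduler M) (R : S → ℝ) :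
    ℕ → FPath S A → ℝ
  | 0, p => R (fpLast p)
  | n + 1, p => R (fpLast p) + stepExp M σ p (fun p' => expRewN M σ R n p')

/-- Expected total reward `E^{M,σ}_s(R)`. -/
def expTotalReward {S A : Type} (M : MDP S A) (σ : Scheduler M) (R : S → ℝ) (s : S) : ℝ :=
  limUnder atTop (fun n => expRewN M σ R n (s, []))

end

/-!
For a monotone function `f` of sets of states, the expected value of `f` at the set of states
visited during the steps `j, …, j + n` is monotone in `n` and antitone in `j`, so it converges;
the limit is monotone and additive in `f`, and for the indicator of "meets `T`" it is the Büchi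
probability of `T`. Hence every pointwise inequality between such functions transfers to these
limits.

In `M_φ` the column of the state advances cyclically, so every window of `N` steps meets every
column. If `φ` is unsatisfiable, a set `V` of literals meeting every column either contains both
literals of some variable or is the graph of an assignment and so misses some clause; therefore
`∑ⱼ [V meets Cⱼ] + (N + 1) [V meets every column] ≤ M + ∑ᵢ ([xᵢ ∈ V] + [x̄ᵢ ∈ V])`, and passing to
the limit bounds the objective by `N + M - 1`. Conversely, a satisfying assignment `v` gives the
scheduler that always moves to the literal true under `v`: from the first step on it visits
exactly these literals, each of them infinitely often, and the objective equals `N + M`.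
-/

open Finset Topology

theorem fpLast_fpExt {S A : Type} (p : FPath S A) (a : A) (s : S) : fpLast (fpExt p a s) = s := by
  simp [fpLast, fpExt]

theorem monotone_finset_sum {ι α : Type*} [Preorder α] (I : Finset ι) {f : ι → α → ℝ}
    (hf : ∀ i, Monotone (f i)) : Monotone fun x => ∑ i ∈ I, f i x :=
  fun _ _ h => sum_le_sum fun i _ => hf i h

section StepExp

variable {S A : Type} [Fintype S] [Fintype A] {M : MDP S A} (σ : Scheduler M) (p : FPath S A)

theorem stepExp_eq_sum (g : FPath S A → ℝ) :
    stepExp M σ p g = ∑ a, ∑ s, σ.act p a * M.P (fpLast p) a s * g (fpExt p a s) := by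
  simp only [stepExp, tsum_fintype]

theorem stepExp_add (g h : FPath S A → ℝ) :
    stepExp M σ p (fun q => g q + h q) = stepExp M σ p g + stepExp M σ p h := by
  simp only [stepExp_eq_sum, mul_add, sum_add_distrib]

theorem stepExp_const_mul (c : ℝ) (g : FPath S A → ℝ) :
    stepExp M σ p (fun q => c * g q) = c * stepExp M σ p g := by
  simp only [stepExp_eq_sum, mul_sum]
  exact sum_congr rfl fun a _ => sum_congr rfl fun s _ => by ring

theorem stepExp_const (c : ℝ) : stepExp M σ p (fun _ => c) = c := by
  have hrow : ∀ a, ∑ s, σ.act p a * M.P (fpLast p) a s = σ.act p a := by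
    intro a
    rw [← mul_sum]
    by_cases ha : M.Enabled (fpLast p) a
    · rw [MDP.Enabled, tsum_fintype] at ha
      rw [ha, mul_one]
    · rw [σ.not_enabled p a ha, zero_mul]
  have hσ := σ.sum_one p
  rw [tsum_fintype] at hσ
  simp_rw [stepExp_eq_sum, ← sum_mul, hrow, hσ, one_mul]

theorem stepExp_mono_of_support {g h : FPath S A → ℝ}
    (H : ∀ a s, σ.act p a ≠ 0 → M.P (fpLast p) a s ≠ 0 → g (fpExt p a s) ≤ h (fpExt p a s)) :
    stepExp M σ p g ≤ stepExp M σ p h := by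
  rw [stepExp_eq_sum, stepExp_eq_sum]
  refine sum_le_sum fun a _ => sum_le_sum fun s _ => ?_
  by_cases ha : σ.act p a = 0
  · simp [ha]
  by_cases hs : M.P (fpLast p) a s = 0
  · simp [hs]
  exact mul_le_mul_of_nonneg_left (H a s ha hs) (mul_nonneg (σ.nonneg p a) (M.nonneg _ a s))

theorem stepExp_mono {g h : FPath S A → ℝ} (H : ∀ q, g q ≤ h q) :
    stepExp M σ p g ≤ stepExp M σ p h :=
  stepExp_mono_of_support σ p fun _ _ _ _ => H _

theorem stepExp_eq_of_support {g : FPath S A → ℝ} {c : ℝ}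
    (H : ∀ a s, σ.act p a ≠ 0 → M.P (fpLast p) a s ≠ 0 → g (fpExt p a s) = c) :
    stepExp M σ p g = c := by
  rw [← stepExp_const σ p c]
  exact le_antisymm (stepExp_mono_of_support σ p fun a s ha hs => (H a s ha hs).le)
    (stepExp_mono_of_support σ p fun a s ha hs => (H a s ha hs).ge)

end StepExp

noncomputable section Visits

variable {S A : Type} {M : MDP S A} (σ : Scheduler M)

/-- Expected value of `f` at `V` together with the states visited during the next `n` steps
after `p`, the last state of `p` included. -/
def visitExp (f : Set S → ℝ) : ℕ → Set S → FPath S A → ℝ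
  | 0, V, p => f (insert (fpLast p) V)
  | n + 1, V, p => stepExp M σ p (fun q => visitExp f n (insert (fpLast p) V) q)

/-- `visitExp` for the states visited at the steps `j, …, j + n`. -/
def windowExp (f : Set S → ℝ) : ℕ → ℕ → FPath S A → ℝ
  | 0, n, p => visitExp σ f n ∅ p
  | j + 1, n, p => stepExp M σ p (fun q => windowExp f j n q)

/-- For monotone `f`, this is the expected value of `f` at the set of states visited infinitely
often. -/
def infOftenExp (f : Set S → ℝ) (s : S) : ℝ :=
  ⨅ j, ⨆ n, windowExp σ f j n (s, [])

variable [Fintype S] [Fintype A] {f g : Set S → ℝ}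

theorem visitExp_add (n : ℕ) (V : Set S) (p : FPath S A) :
    visitExp σ (fun W => f W + g W) n V p = visitExp σ f n V p + visitExp σ g n V p := by
  induction n generalizing V p with
  | zero => rfl
  | succ n ih => simp only [visitExp, ih, stepExp_add]

theorem visitExp_const_mul (c : ℝ) (n : ℕ) (V : Set S) (p : FPath S A) :
    visitExp σ (fun W => c * f W) n V p = c * visitExp σ f n V p := by
  induction n generalizing V p with
  | zero => rfl
  | succ n ih => simp only [visitExp, ih, stepExp_const_mul]

theorem visitExp_const (c : ℝ) (n : ℕ) (V : Set S) (p : FPath S A) :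
    visitExp σ (fun _ => c) n V p = c := by
  induction n generalizing V p with
  | zero => rfl
  | succ n ih => simp only [visitExp, ih, stepExp_const]

theorem visitExp_mono (h : ∀ W, f W ≤ g W) (n : ℕ) (V : Set S) (p : FPath S A) :
    visitExp σ f n V p ≤ visitExp σ g n V p := by
  induction n generalizing V p with
  | zero => exact h _
  | succ n ih => exact stepExp_mono σ p fun q => ih _ q

theorem visitExp_mono_set (hf : Monotone f) (n : ℕ) {V W : Set S} (hVW : V ⊆ W)
    (p : FPath S A) : visitExp σ f n V p ≤ visitExp σ f n W p := by
  induction n generalizing V W p with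
  | zero => exact hf (Set.insert_subset_insert hVW)
  | succ n ih => exact stepExp_mono σ p fun q => ih (Set.insert_subset_insert hVW) q

theorem visitExp_le_succ (hf : Monotone f) (n : ℕ) (V : Set S) (p : FPath S A) :
    visitExp σ f n V p ≤ visitExp σ f (n + 1) V p := by
  induction n generalizing V p with
  | zero =>
    calc visitExp σ f 0 V p = stepExp M σ p (fun _ => f (insert (fpLast p) V)) :=
          (stepExp_const σ p _).symm
      _ ≤ visitExp σ f 1 V p := stepExp_mono σ p fun q => hf (Set.subset_insert _ _)
  | succ n ih => exact stepExp_mono σ p fun q => ih _ q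

theorem windowExp_add (j n : ℕ) (p : FPath S A) :
    windowExp σ (fun W => f W + g W) j n p = windowExp σ f j n p + windowExp σ g j n p := by
  induction j generalizing p with
  | zero => exact visitExp_add σ n ∅ p
  | succ j ih => simp only [windowExp, ih, stepExp_add]

theorem windowExp_const_mul (c : ℝ) (j n : ℕ) (p : FPath S A) :
    windowExp σ (fun W => c * f W) j n p = c * windowExp σ f j n p := by
  induction j generalizing p with
  | zero => exact visitExp_const_mul σ c n ∅ p
  | succ j ih => simp only [windowExp, ih, stepExp_const_mul]

theorem windowExp_const (c : ℝ) (j n : ℕ) (p : FPath S A) :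
    windowExp σ (fun _ => c) j n p = c := by
  induction j generalizing p with
  | zero => exact visitExp_const σ c n ∅ p
  | succ j ih => simp only [windowExp, ih, stepExp_const]

theorem windowExp_mono (h : ∀ W, f W ≤ g W) (j n : ℕ) (p : FPath S A) :
    windowExp σ f j n p ≤ windowExp σ g j n p := by
  induction j generalizing p with
  | zero => exact visitExp_mono σ h n ∅ p
  | succ j ih => exact stepExp_mono σ p fun q => ih q

theorem windowExp_le_succ (hf : Monotone f) (j n : ℕ) (p : FPath S A) :
    windowExp σ f j n p ≤ windowExp σ f j (n + 1) p := by
  induction j generalizing p with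
  | zero => exact visitExp_le_succ σ hf n ∅ p
  | succ j ih => exact stepExp_mono σ p fun q => ih q

theorem windowExp_succ_le (hf : Monotone f) (j n : ℕ) (p : FPath S A) :
    windowExp σ f (j + 1) n p ≤ windowExp σ f j (n + 1) p := by
  induction j generalizing p with
  | zero => exact stepExp_mono σ p fun q => visitExp_mono_set σ hf n (Set.empty_subset _) q
  | succ j ih => exact stepExp_mono σ p fun q => ih q

theorem bddAbove_windowExp (f : Set S → ℝ) (j : ℕ) (p : FPath S A) :
    BddAbove (Set.range fun n => windowExp σ f j n p) := by
  obtain ⟨B, hB⟩ := Finite.exists_le f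
  refine ⟨B, ?_⟩
  rintro _ ⟨n, rfl⟩
  simpa only [windowExp_const] using windowExp_mono σ hB j n p

theorem bddBelow_iSup_windowExp (f : Set S → ℝ) (p : FPath S A) :
    BddBelow (Set.range fun j => ⨆ n, windowExp σ f j n p) := by
  obtain ⟨B, hB⟩ := Finite.exists_ge f
  refine ⟨B, ?_⟩
  rintro _ ⟨j, rfl⟩
  calc B = windowExp σ (fun _ => B) j 0 p := (windowExp_const σ B j 0 p).symm
    _ ≤ windowExp σ f j 0 p := windowExp_mono σ hB j 0 p
    _ ≤ ⨆ n, windowExp σ f j n p := le_ciSup (bddAbove_windowExp σ f j p) 0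

theorem tendsto_windowExp (hf : Monotone f) (j : ℕ) (p : FPath S A) :
    Tendsto (fun n => windowExp σ f j n p) atTop (𝓝 (⨆ n, windowExp σ f j n p)) :=
  tendsto_atTop_ciSup (monotone_nat_of_le_succ fun n => windowExp_le_succ σ hf j n p)
    (bddAbove_windowExp σ f j p)

theorem tendsto_infOftenExp (hf : Monotone f) (s : S) :
    Tendsto (fun j => ⨆ n, windowExp σ f j n (s, [])) atTop (𝓝 (infOftenExp σ f s)) := by
  refine tendsto_atTop_ciInf (antitone_nat_of_succ_le fun j => ?_)
    (bddBelow_iSup_windowExp σ f _)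
  exact ciSup_le fun n => (windowExp_succ_le σ hf j n _).trans
    (le_ciSup (bddAbove_windowExp σ f j _) (n + 1))

theorem infOftenExp_add (hf : Monotone f) (hg : Monotone g) (s : S) :
    infOftenExp σ (fun V => f V + g V) s = infOftenExp σ f s + infOftenExp σ g s := by
  have hsup : ∀ j, ⨆ n, windowExp σ (fun V => f V + g V) j n (s, []) =
      (⨆ n, windowExp σ f j n (s, [])) + ⨆ n, windowExp σ g j n (s, []) := fun j =>
    tendsto_nhds_unique (tendsto_windowExp σ (hf.add hg) j _) <| by
      simpa only [windowExp_add] using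
        (tendsto_windowExp σ hf j _).add (tendsto_windowExp σ hg j _)
  refine tendsto_nhds_unique (tendsto_infOftenExp σ (hf.add hg) s) ?_
  simpa only [hsup] using (tendsto_infOftenExp σ hf s).add (tendsto_infOftenExp σ hg s)

theorem infOftenExp_const (c : ℝ) (s : S) : infOftenExp σ (fun _ => c) s = c := by
  simp only [infOftenExp, windowExp_const, ciSup_const, ciInf_const]

theorem infOftenExp_const_mul {c : ℝ} (hc : 0 ≤ c) (s : S) :
    infOftenExp σ (fun V => c * f V) s = c * infOftenExp σ f s := by
  simp only [infOftenExp, windowExp_const_mul, Real.mul_iInf_of_nonneg hc,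
    Real.mul_iSup_of_nonneg hc]

theorem infOftenExp_sum {ι : Type*} (I : Finset ι) {f : ι → Set S → ℝ}
    (hf : ∀ i, Monotone (f i)) (s : S) :
    infOftenExp σ (fun V => ∑ i ∈ I, f i V) s = ∑ i ∈ I, infOftenExp σ (f i) s := by
  classical
  induction I using Finset.induction with
  | empty => simpa using infOftenExp_const σ 0 s
  | insert i I hi ih =>
    simp only [sum_insert hi]
    rw [infOftenExp_add σ (hf i) (monotone_finset_sum I hf), ih]

theorem infOftenExp_mono (hf : Monotone f) (hg : Monotone g) (h : ∀ V, f V ≤ g V) (s : S) :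
    infOftenExp σ f s ≤ infOftenExp σ g s :=
  le_of_tendsto_of_tendsto' (tendsto_infOftenExp σ hf s) (tendsto_infOftenExp σ hg s) fun j =>
    ciSup_mono (bddAbove_windowExp σ g j _) fun n => windowExp_mono σ h j n _

theorem le_infOftenExp_of_visitExp {c : ℝ} {n : ℕ} (h : ∀ q, c ≤ visitExp σ f n ∅ q) (s : S) :
    c ≤ infOftenExp σ f s := by
  have hwin : ∀ j p, c ≤ windowExp σ f j n p := by
    intro j
    induction j with
    | zero => exact h
    | succ j ih => exact fun p => (stepExp_const σ p c).symm.le.trans (stepExp_mono σ p ih)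
  exact le_ciInf fun j => (hwin j _).trans (le_ciSup (bddAbove_windowExp σ f j _) n)

theorem infOftenExp_le_of_windowExp {c : ℝ} {s : S} (j : ℕ)
    (h : ∀ n, windowExp σ f j n (s, []) ≤ c) : infOftenExp σ f s ≤ c :=
  (ciInf_le (bddBelow_iSup_windowExp σ f _) j).trans (ciSup_le h)

end Visits

noncomputable section Indicators

variable {S : Type}

def indicatorOf (P : Set S → Prop) (V : Set S) : ℝ := if P V then 1 else 0

theorem indicatorOf_nonneg (P : Set S → Prop) (V : Set S) : 0 ≤ indicatorOf P V := by
  unfold indicatorOf; split_ifs <;> norm_num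

theorem indicatorOf_le_one (P : Set S → Prop) (V : Set S) : indicatorOf P V ≤ 1 := by
  unfold indicatorOf; split_ifs <;> norm_num

theorem indicatorOf_mono {P Q : Set S → Prop} {V W : Set S} (h : P V → Q W) :
    indicatorOf P V ≤ indicatorOf Q W := by
  by_cases hP : P V
  · simp [indicatorOf, hP, h hP]
  · exact (if_neg hP).trans_le (indicatorOf_nonneg Q W)

theorem monotone_indicatorOf {P : Set S → Prop} (hP : Monotone P) : Monotone (indicatorOf P) :=
  fun _ _ hVW => indicatorOf_mono (hP hVW)

def hitInd (T : Set S) : Set S → ℝ := indicatorOf fun V => ¬ Disjoint V T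

theorem monotone_hitInd (T : Set S) : Monotone (hitInd T) :=
  monotone_indicatorOf fun _ _ hVW hV hW => hV (hW.mono_left hVW)

theorem hitInd_singleton (x : S) (V : Set S) : hitInd {x} V = if x ∈ V then 1 else 0 := by
  simp [hitInd, indicatorOf]

end Indicators

section Buchi

variable {S A : Type} [Fintype S] [Fintype A] {M : MDP S A} (σ : Scheduler M)

theorem visitExp_hitInd (T : Set S) (n : ℕ) (V : Set S) (p : FPath S A) :
    visitExp σ (hitInd T) n V p = if Disjoint V T then reachN M σ T n p else 1 := by
  induction n generalizing V p with
  | zero =>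
    by_cases hs : fpLast p ∈ T <;>
      simp [visitExp, hitInd, indicatorOf, reachN, hs, Set.disjoint_insert_left]
  | succ n ih =>
    simp only [visitExp, ih, reachN, Set.disjoint_insert_left]
    by_cases hs : fpLast p ∈ T
    · simp [hs, stepExp_const]
    · by_cases hV : Disjoint V T <;> simp [hs, hV, stepExp_const]

theorem windowExp_hitInd (T : Set S) (j n : ℕ) (p : FPath S A) :
    windowExp σ (hitInd T) j n p = reachAfterN M σ T j n p := by
  induction j generalizing p with
  | zero => simp [windowExp, visitExp_hitInd, reachAfterN]
  | succ j ih => simp only [windowExp, reachAfterN, ih]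

theorem buchiProb_eq_infOftenExp (s : S) (T : Set S) :
    buchiProb M σ s T = infOftenExp σ (hitInd T) s := by
  simp only [buchiProb, infOftenExp, windowExp_hitInd]

theorem buchiProb_nonneg (s : S) (T : Set S) : 0 ≤ buchiProb M σ s T := by
  rw [buchiProb_eq_infOftenExp, ← infOftenExp_const σ 0 s]
  exact infOftenExp_mono σ monotone_const (monotone_hitInd T) (indicatorOf_nonneg _) s

theorem buchiProb_le_one (s : S) (T : Set S) : buchiProb M σ s T ≤ 1 := by
  rw [buchiProb_eq_infOftenExp, ← infOftenExp_const σ 1 s]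
  exact infOftenExp_mono σ (monotone_hitInd T) monotone_const (indicatorOf_le_one _) s

theorem buchiProb_mono (s : S) {T T' : Set S} (h : T ⊆ T') :
    buchiProb M σ s T ≤ buchiProb M σ s T' := by
  simp only [buchiProb_eq_infOftenExp]
  exact infOftenExp_mono σ (monotone_hitInd T) (monotone_hitInd T')
    (fun _ => indicatorOf_mono fun hV hV' => hV (hV'.mono_right h)) s

end Buchi

noncomputable section CycleMDP

variable {N : ℕ}

/-- The number of steps from column `c` to column `i` along the cycle `0 → 1 → ⋯ → N - 1 → 0`. -/
def cycDist (c i : Fin N) : ℕ := if c.1 ≤ i.1 then i.1 - c.1 else i.1 + N - c.1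

theorem cycDist_le (c i : Fin N) : cycDist c i ≤ N - 1 := by
  have := c.2; have := i.2
  unfold cycDist; split <;> omega

theorem eq_of_cycDist_eq_zero {c i : Fin N} (h : cycDist c i = 0) : i = c := by
  have := c.2; have := i.2
  unfold cycDist at h
  ext; split at h <;> omega

def nextCol (hN : 0 < N) (i : Fin N) : Fin N := ⟨(i.1 + 1) % N, Nat.mod_lt _ hN⟩

theorem cycDist_nextCol (hN : 0 < N) {c i : Fin N} (h : i ≠ c) :
    cycDist (nextCol hN c) i + 1 = cycDist c i := by
  have := c.2; have := i.2
  have hne : i.1 ≠ c.1 := Fin.val_ne_of_ne h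
  have hnext : (nextCol hN c).1 = (c.1 + 1) % N := rfl
  unfold cycDist
  rcases Nat.lt_or_ge (c.1 + 1) N with hc | hc
  · rw [hnext, Nat.mod_eq_of_lt hc]; split <;> split <;> omega
  · rw [hnext, show c.1 + 1 = N by omega, Nat.mod_self]; split <;> split <;> omega

/-- The transition function of `M_φ`: action `c` moves from column `i` to the literal
`(i + 1 mod N, c)`. -/
def IsCycleMDP (hN : 0 < N) (M : MDP (Fin N × Bool) Bool) : Prop :=
  ∀ (i : Fin N) (b c : Bool), M.P (i, b) c (nextCol hN i, c) = 1 ∧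
    ∀ y, y ≠ (nextCol hN i, c) → M.P (i, b) c y = 0

variable {hN : 0 < N} {M : MDP (Fin N × Bool) Bool}

theorem IsCycleMDP.eq_of_P_ne_zero (hM : IsCycleMDP hN M) {s y : Fin N × Bool} {a : Bool}
    (h : M.P s a y ≠ 0) : y = (nextCol hN s.1, a) := by
  by_contra hy
  exact h ((hM s.1 s.2 a).2 y hy)

theorem IsCycleMDP.enabled (hM : IsCycleMDP hN M) (s : Fin N × Bool) (a : Bool) :
    M.Enabled s a := by
  rw [MDP.Enabled, tsum_fintype,
    sum_eq_single (nextCol hN s.1, a) (fun y _ hy => (hM s.1 s.2 a).2 y hy) (by simp)]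
  exact (hM s.1 s.2 a).1

def AllColumnsMet (V : Set (Fin N × Bool)) : Prop := ∀ i, ∃ b, (i, b) ∈ V

theorem monotone_allColumnsMet : Monotone (AllColumnsMet (N := N)) :=
  fun _ _ hVW hV i => (hV i).imp fun _ hb => hVW hb

theorem one_le_visitExp_allColumnsMet (hM : IsCycleMDP hN M) (σ : Scheduler M) (n : ℕ)
    (V : Set (Fin N × Bool)) (p : FPath (Fin N × Bool) Bool)
    (h : ∀ i, (∃ b, (i, b) ∈ V) ∨ cycDist (fpLast p).1 i ≤ n) :
    1 ≤ visitExp σ (indicatorOf AllColumnsMet) n V p := by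
  induction n generalizing V p with
  | zero =>
    have hmet : AllColumnsMet (insert (fpLast p) V) := fun i => by
      rcases h i with ⟨b, hb⟩ | hi
      · exact ⟨b, Set.mem_insert_of_mem _ hb⟩
      · rw [eq_of_cycDist_eq_zero (Nat.le_zero.1 hi)]
        exact ⟨(fpLast p).2, Set.mem_insert _ _⟩
    simp [visitExp, indicatorOf, hmet]
  | succ n ih =>
    calc (1 : ℝ) = stepExp M σ p (fun _ => 1) := (stepExp_const σ p 1).symm
      _ ≤ visitExp σ (indicatorOf AllColumnsMet) (n + 1) V p := by
        refine stepExp_mono_of_support σ p fun a s _ hs => ih _ _ fun i => ?_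
        rw [fpLast_fpExt, hM.eq_of_P_ne_zero hs]
        dsimp only
        by_cases hi : i = (fpLast p).1
        · exact Or.inl ⟨(fpLast p).2, hi ▸ Set.mem_insert _ _⟩
        rcases h i with ⟨b, hb⟩ | hd
        · exact Or.inl ⟨b, Set.mem_insert_of_mem _ hb⟩
        · have := cycDist_nextCol hN hi
          exact Or.inr (by omega)

theorem one_le_infOftenExp_allColumnsMet (hM : IsCycleMDP hN M) (σ : Scheduler M)
    (s : Fin N × Bool) : 1 ≤ infOftenExp σ (indicatorOf AllColumnsMet) s :=
  le_infOftenExp_of_visitExp σ (fun q => one_le_visitExp_allColumnsMet hM σ (N - 1) ∅ q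
    fun _ => Or.inr (cycDist_le _ _)) s

theorem indicatorOf_allColumnsMet_le (i : Fin N) (b : Bool) (V : Set (Fin N × Bool)) :
    indicatorOf AllColumnsMet V ≤ hitInd {(i, b)} V + hitInd {(i, !b)} V := by
  by_cases hV : AllColumnsMet V
  · obtain ⟨b', hb'⟩ := hV i
    rcases Bool.eq_or_eq_not b' b with rfl | rfl <;>
      simp [indicatorOf, hitInd_singleton, hb', hV] <;> split_ifs <;> norm_num
  · simp only [indicatorOf, hV, if_false]
    exact add_nonneg (indicatorOf_nonneg _ _) (indicatorOf_nonneg _ _)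

theorem one_le_buchiProb_add (hM : IsCycleMDP hN M) (σ : Scheduler M) (s : Fin N × Bool)
    (i : Fin N) (b : Bool) : 1 ≤ buchiProb M σ s {(i, b)} + buchiProb M σ s {(i, !b)} := by
  simp only [buchiProb_eq_infOftenExp]
  rw [← infOftenExp_add σ (monotone_hitInd _) (monotone_hitInd _)]
  exact (one_le_infOftenExp_allColumnsMet hM σ s).trans <|
    infOftenExp_mono σ (monotone_indicatorOf monotone_allColumnsMet)
      ((monotone_hitInd _).add (monotone_hitInd _)) (indicatorOf_allColumnsMet_le i b) s

end CycleMDP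

noncomputable section Assignment

variable {N : ℕ} {hN : 0 < N} {M : MDP (Fin N × Bool) Bool} (hM : IsCycleMDP hN M)
  (v : Fin N → Bool)

def assignmentScheduler : Scheduler M where
  act p a := if a = v (nextCol hN (fpLast p).1) then 1 else 0
  nonneg p a := by split_ifs <;> norm_num
  sum_one p := by
    rw [tsum_fintype, Fintype.sum_bool]
    cases v (nextCol hN (fpLast p).1) <;> simp
  not_enabled p a h := absurd (hM.enabled _ a) h

theorem eq_of_assignmentScheduler_act_ne_zero {p : FPath (Fin N × Bool) Bool} {a : Bool}
    (h : (assignmentScheduler hM v).act p a ≠ 0) : a = v (nextCol hN (fpLast p).1) := by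
  by_contra ha
  exact h (if_neg ha)

theorem visitExp_assignmentScheduler_hitInd {T : Set (Fin N × Bool)} (hT : ∀ i, (i, v i) ∉ T)
    (n : ℕ) (V : Set (Fin N × Bool)) (p : FPath (Fin N × Bool) Bool)
    (hV : Disjoint (insert (fpLast p) V) T) :
    visitExp (assignmentScheduler hM v) (hitInd T) n V p = 0 := by
  induction n generalizing V p with
  | zero => simp [visitExp, hitInd, indicatorOf, hV]
  | succ n ih =>
    refine stepExp_eq_of_support _ p fun a s ha hs => ih _ _ ?_
    rw [fpLast_fpExt, hM.eq_of_P_ne_zero hs, eq_of_assignmentScheduler_act_ne_zero hM v ha]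
    exact Set.disjoint_insert_left.2 ⟨hT _, hV⟩

theorem buchiProb_assignmentScheduler_eq_zero {T : Set (Fin N × Bool)}
    (hT : ∀ i, (i, v i) ∉ T) (s : Fin N × Bool) :
    buchiProb M (assignmentScheduler hM v) s T = 0 := by
  refine le_antisymm ?_ (buchiProb_nonneg _ s T)
  rw [buchiProb_eq_infOftenExp]
  refine infOftenExp_le_of_windowExp _ 1 fun n => le_of_eq ?_
  refine stepExp_eq_of_support _ _ fun a s' ha hs => ?_
  refine visitExp_assignmentScheduler_hitInd hM v hT n ∅ _ ?_
  rw [fpLast_fpExt, hM.eq_of_P_ne_zero hs, eq_of_assignmentScheduler_act_ne_zero hM v ha]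
  exact Set.disjoint_insert_left.2 ⟨hT _, Set.empty_disjoint T⟩

theorem one_le_buchiProb_assignmentScheduler (s : Fin N × Bool) (i : Fin N) :
    1 ≤ buchiProb M (assignmentScheduler hM v) s {(i, v i)} := by
  have h := one_le_buchiProb_add hM (assignmentScheduler hM v) s i (v i)
  rwa [buchiProb_assignmentScheduler_eq_zero hM v (T := {(i, !v i)}) (by simp) s, add_zero] at h

theorem buchiProb_assignmentScheduler_add_le_one (s : Fin N × Bool) (i : Fin N) :
    buchiProb M (assignmentScheduler hM v) s {(i, true)} +
      buchiProb M (assignmentScheduler hM v) s {(i, false)} ≤ 1 := by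
  cases hvi : v i
  · rw [buchiProb_assignmentScheduler_eq_zero hM v (by simp [hvi]) s, zero_add]
    exact buchiProb_le_one _ s _
  · rw [buchiProb_assignmentScheduler_eq_zero hM v (T := {(i, false)}) (by simp [hvi]) s,
      add_zero]
    exact buchiProb_le_one _ s _

end Assignment

section Unsatisfiable

variable {N Mn : ℕ}

theorem sum_hitInd_clauses_add_le (Cl : Fin Mn → Finset (Fin N × Bool))
    (hunsat : ∀ v : Fin N → Bool, ∃ j, ∀ l ∈ Cl j, v l.1 ≠ l.2) (V : Set (Fin N × Bool)) :
    ∑ j, hitInd (Cl j : Set (Fin N × Bool)) V + (N + 1) * indicatorOf AllColumnsMet V ≤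
      Mn + ∑ i, (hitInd {(i, true)} V + hitInd {(i, false)} V) := by
  set t : Fin N → ℝ := fun i => hitInd {(i, true)} V + hitInd {(i, false)} V with ht
  have hle : ∀ j, hitInd (Cl j : Set (Fin N × Bool)) V ≤ 1 := fun j => indicatorOf_le_one _ V
  have hclauses : ∑ j, hitInd (Cl j : Set (Fin N × Bool)) V ≤ Mn := by
    simpa using sum_le_sum fun j (_ : j ∈ univ) => hle j
  by_cases hcov : AllColumnsMet V
  swap
  · have : 0 ≤ ∑ i, t i :=
      sum_nonneg fun i _ => add_nonneg (indicatorOf_nonneg _ _) (indicatorOf_nonneg _ _)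
    simp only [indicatorOf, hcov, if_false]
    linarith
  have hcol : ∀ i, 1 ≤ t i := fun i => by
    simpa [indicatorOf, hcov] using indicatorOf_allColumnsMet_le i true V
  simp only [indicatorOf, hcov, if_true, mul_one]
  by_cases hboth : ∃ i, (i, true) ∈ V ∧ (i, false) ∈ V
  · obtain ⟨i₀, h₁, h₂⟩ := hboth
    have hi₀ : t i₀ = 2 := by norm_num [ht, hitInd_singleton, h₁, h₂]
    have := single_le_sum (fun i _ => sub_nonneg.2 (hcol i)) (mem_univ i₀)
    simp only [sum_sub_distrib, sum_const, card_univ, Fintype.card_fin, nsmul_eq_mul, mul_one,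
      hi₀] at this
    linarith
  · simp only [not_exists, not_and] at hboth
    obtain ⟨j₀, hj₀⟩ := hunsat fun i => decide ((i, true) ∈ V)
    have hmiss : hitInd (Cl j₀ : Set (Fin N × Bool)) V = 0 := by
      refine if_neg (not_not.2 (Set.disjoint_left.2 ?_))
      rintro ⟨i, b⟩ hV hC
      refine hj₀ _ hC ?_
      cases b <;> simp_all
    have := single_le_sum (fun j _ => sub_nonneg.2 (hle j)) (mem_univ j₀)
    simp only [sum_sub_distrib, sum_const, card_univ, Fintype.card_fin, nsmul_eq_mul, mul_one,
      hmiss] at this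
    have := sum_le_sum fun i (_ : i ∈ univ) => hcol i
    simp only [sum_const, card_univ, Fintype.card_fin, nsmul_eq_mul, mul_one] at this
    linarith

theorem sum_buchiProb_clauses_add_le {hN : 0 < N} {M : MDP (Fin N × Bool) Bool}
    (hM : IsCycleMDP hN M) (σ : Scheduler M) (s : Fin N × Bool)
    (Cl : Fin Mn → Finset (Fin N × Bool))
    (hunsat : ∀ v : Fin N → Bool, ∃ j, ∀ l ∈ Cl j, v l.1 ≠ l.2) :
    ∑ j, buchiProb M σ s (Cl j : Set (Fin N × Bool)) + (N + 1) ≤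
      Mn + ∑ i, (buchiProb M σ s {(i, true)} + buchiProb M σ s {(i, false)}) := by
  have hhit (T : Set (Fin N × Bool)) := monotone_hitInd T
  have hcov := monotone_indicatorOf (monotone_allColumnsMet (N := N))
  have hclauses := monotone_finset_sum univ fun j => hhit (Cl j : Set (Fin N × Bool))
  have hcols := monotone_finset_sum univ fun i : Fin N => (hhit {(i, true)}).add (hhit {(i, false)})
  have hN1 : (0 : ℝ) ≤ N + 1 := by positivity
  simp only [buchiProb_eq_infOftenExp]
  calc ∑ j, infOftenExp σ (hitInd (Cl j : Set (Fin N × Bool))) s + (N + 1)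
      ≤ ∑ j, infOftenExp σ (hitInd (Cl j : Set (Fin N × Bool))) s +
          (N + 1) * infOftenExp σ (indicatorOf AllColumnsMet) s := by
        gcongr
        exact le_mul_of_one_le_right hN1 (one_le_infOftenExp_allColumnsMet hM σ s)
    _ = infOftenExp σ (fun V => ∑ j, hitInd (Cl j : Set (Fin N × Bool)) V +
          (N + 1) * indicatorOf AllColumnsMet V) s := by
        rw [infOftenExp_add σ hclauses (hcov.const_mul hN1), infOftenExp_sum σ _ fun j => hhit _,
          infOftenExp_const_mul σ hN1]
    _ ≤ infOftenExp σ (fun V => Mn + ∑ i, (hitInd {(i, true)} V + hitInd {(i, false)} V)) s :=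
        infOftenExp_mono σ (hclauses.add (hcov.const_mul hN1)) (monotone_const.add hcols)
          (sum_hitInd_clauses_add_le Cl hunsat) s
    _ = Mn + ∑ i, (infOftenExp σ (hitInd {(i, true)}) s +
          infOftenExp σ (hitInd {(i, false)}) s) := by
        rw [infOftenExp_add σ monotone_const hcols, infOftenExp_const,
          infOftenExp_sum σ _ fun i => (hhit _).add (hhit _)]
        simp only [infOftenExp_add σ (hhit _) (hhit _)]

end Unsatisfiable

/-- States of `M_φ` are literals `(i, b) : Fin N × Bool`, with `(i, true)` representing `xᵢ` and
`(i, false)` representing `x̄ᵢ`; actions are `Bool`, with `true` representing `α` and `false`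
representing `ᾱ`. -/
theorem sat_iff_relBuechi_scheduler_general
    (N : ℕ) (hN : 0 < N) (Mn : ℕ)
    (Cl : Fin Mn → Finset (Fin N × Bool))
    (Mφ : MDP (Fin N × Bool) Bool)
    (hP : ∀ (i : Fin N) (b c : Bool),
      Mφ.P (i, b) c ((⟨(i.1 + 1) % N, Nat.mod_lt _ hN⟩ : Fin N), c) = 1 ∧
      ∀ y : Fin N × Bool, y ≠ ((⟨(i.1 + 1) % N, Nat.mod_lt _ hN⟩ : Fin N), c) →
        Mφ.P (i, b) c y = 0) :
    (∃ v : Fin N → Bool, ∀ j : Fin Mn, ∃ l ∈ Cl j, v l.1 = l.2) ↔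
    (∃ σ : Scheduler Mφ,
        (∑ i : Fin N,
            ((2 : ℝ) -
              (buchiProb Mφ σ ((⟨0, hN⟩ : Fin N), true) {(i, true)} +
                buchiProb Mφ σ ((⟨0, hN⟩ : Fin N), true) {(i, false)}))) +
          (∑ j : Fin Mn, buchiProb Mφ σ ((⟨0, hN⟩ : Fin N), true) (↑(Cl j) : Set (Fin N × Bool)))
          ≥ (N : ℝ) + (Mn : ℝ)) := by
  have hM : IsCycleMDP hN Mφ := hP
  constructor
  · rintro ⟨v, hv⟩
    refine ⟨assignmentScheduler hM v, ?_⟩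
    have hclause (j : Fin Mn) : 1 ≤ buchiProb Mφ (assignmentScheduler hM v) (⟨0, hN⟩, true)
        (Cl j : Set (Fin N × Bool)) := by
      obtain ⟨l, hl, hvl⟩ := hv j
      refine (one_le_buchiProb_assignmentScheduler hM v _ l.1).trans (buchiProb_mono _ _ ?_)
      simpa [hvl] using hl
    have hcols := sum_le_sum fun i (_ : i ∈ univ) =>
      buchiProb_assignmentScheduler_add_le_one hM v (⟨0, hN⟩, true) i
    have hclauses := sum_le_sum fun j (_ : j ∈ univ) => hclause j
    simp only [sum_sub_distrib, sum_const, card_univ, Fintype.card_fin, nsmul_eq_mul]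
      at hcols hclauses ⊢
    linarith
  · rintro ⟨σ, hσ⟩
    by_contra hunsat
    simp only [not_exists, not_forall, not_and] at hunsat
    have hbound := sum_buchiProb_clauses_add_le hM σ (⟨0, hN⟩, true) Cl hunsat
    simp only [sum_sub_distrib, sum_const, card_univ, Fintype.card_fin, nsmul_eq_mul] at hσ
    linarith

/-- States of `M_φ` are literals `(i, b) : Fin N × Bool`, with `(i, true)` representing `xᵢ` and
`(i, false)` representing `x̄ᵢ`; actions are `Bool`, with `true` representing `α` and `false`
representing `ᾱ`.  Clauses are nonempty finite sets of literals. -/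
theorem sat_iff_relBuechi_scheduler
    (N : ℕ) (hN : 0 < N) (Mn : ℕ)
    (Cl : Fin Mn → Finset (Fin N × Bool)) (hCl : ∀ j, (Cl j).Nonempty)
    (Mφ : MDP (Fin N × Bool) Bool)
    (hP : ∀ (i : Fin N) (b c : Bool),
      Mφ.P (i, b) c ((⟨(i.1 + 1) % N, Nat.mod_lt _ hN⟩ : Fin N), c) = 1 ∧
      ∀ y : Fin N × Bool, y ≠ ((⟨(i.1 + 1) % N, Nat.mod_lt _ hN⟩ : Fin N), c) →
        Mφ.P (i, b) c y = 0) :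
    (∃ v : Fin N → Bool, ∀ j : Fin Mn, ∃ l ∈ Cl j, v l.1 = l.2) ↔
    (∃ σ : Scheduler Mφ,
        (∑ i : Fin N,
            ((2 : ℝ) -
              (buchiProb Mφ σ ((⟨0, hN⟩ : Fin N), true) {(i, true)} +
                buchiProb Mφ σ ((⟨0, hN⟩ : Fin N), true) {(i, false)}))) +
          (∑ j : Fin Mn, buchiProb Mφ σ ((⟨0, hN⟩ : Fin N), true) (↑(Cl j) : Set (Fin N × Bool)))
          ≥ (N : ℝ) + (Mn : ℝ)) :=
  sat_iff_relBuechi_scheduler_general N hN Mn Cl Mφ hP
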